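/- Let M_1 < M_2 be rank-2 oriented matroids (M_1 a weak map image of M_2) and let z_2 be a nonzero covector of M_2. Then the set A = {z ∈ V*(M_1) \ {0} : z ≤ z_2 componentwise} has a maximal element (in particular, if A is nonempty it has a unique maximal element dominating all others in A). -/
import Mathlib


/-- Sign vectors on `n` elements. -/
abbrev SignVec (n : ℕ) := Fin n → SignType

/-- The order on `{0,+,-}` with `0 < +` and `0 < -`. -/
def sgnLe (a b : SignType) : Prop := a = 0 ∨ a = b

/-- Componentwise order on sign vectors. -/
def svLe {n : ℕ} (X Y : SignVec n) : Prop := ∀ i, sgnLe (X i) (Y i)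

/-- Composition of sign vectors. -/
def svComp {n : ℕ} (X Y : SignVec n) : SignVec n :=
  fun i => if X i ≠ 0 then X i else Y i

/-- The covector axioms for an oriented matroid on `n` elements. -/
def IsCovectorSet {n : ℕ} (V : Set (SignVec n)) : Prop :=
  (0 ∈ V) ∧
  (∀ X ∈ V, -X ∈ V) ∧
  (∀ X ∈ V, ∀ Y ∈ V, svComp X Y ∈ V) ∧
  (∀ X ∈ V, ∀ Y ∈ V, X ≠ -Y → ∀ e : Fin n, X e = -(Y e) → X e ≠ 0 →
    ∃ Z ∈ V, Z e = 0 ∧ ∀ f : Fin n,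
      ((X f = 0 ∧ Y f = 0) → Z f = 0) ∧
      (((X f = 1 ∨ Y f = 1) ∧ X f ≠ -1 ∧ Y f ≠ -1) → Z f = 1) ∧
      (((X f = -1 ∨ Y f = -1) ∧ X f ≠ 1 ∧ Y f ≠ 1) → Z f = -1))

/-- The sign vector of a point of `ℝⁿ`. -/
noncomputable def signVec {n : ℕ} (x : Fin n → ℝ) : SignVec n :=
  fun i => SignType.sign (x i)

/-- The set of sign vectors realized by a linear subspace of `ℝⁿ`. -/
def realCovectors {n : ℕ} (X : Submodule ℝ (Fin n → ℝ)) : Set (SignVec n) :=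
  { s | ∃ x ∈ X, signVec x = s }

/-- Strict componentwise order on sign vectors. -/
def svLt {n : ℕ} (X Y : SignVec n) : Prop := svLe X Y ∧ X ≠ Y

/-- `V` has rank `r` as a subposet of `{0,+,-}ⁿ`: there is a chain of `r+1` elements
of `V` and every chain in `V` has at most `r+1` elements. -/
def IsRank {n : ℕ} (V : Set (SignVec n)) (r : ℕ) : Prop :=
  (∃ c : Fin (r + 1) → SignVec n, (∀ k, c k ∈ V) ∧
      ∀ k l : Fin (r + 1), k < l → svLt (c k) (c l)) ∧
  (∀ m : ℕ, ∀ c : Fin (m + 1) → SignVec n, (∀ k, c k ∈ V) →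
      (∀ k l : Fin (m + 1), k < l → svLt (c k) (c l)) → m ≤ r)

/-- The weak map relation: every covector of `V` is dominated by a covector of `W`. -/
def weakLe {n : ℕ} (V W : Set (SignVec n)) : Prop := ∀ X ∈ V, ∃ Y ∈ W, svLe X Y

/-- Strict weak map relation. -/
def weakLt {n : ℕ} (V W : Set (SignVec n)) : Prop := weakLe V W ∧ ¬ weakLe W V


section OMHelpers

variable {n : ℕ}

lemma om_neg_neg : ∀ a : SignType, -(-a) = a := by decide

lemma om_sr : ∀ a b : SignType, a ≠ 0 → b ≠ 0 → a ≠ b → a = -b := by decide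

lemma om_ne_neg_self : ∀ a : SignType, a ≠ 0 → a ≠ -a := by decide

lemma om_neg_ne_zero : ∀ a : SignType, a ≠ 0 → -a ≠ 0 := by decide

lemma om_vneg_apply (x : SignVec n) (i : Fin n) : (-x) i = -(x i) := rfl

lemma om_zero_apply (i : Fin n) : (0 : SignVec n) i = 0 := rfl

lemma om_vneg_neg (x : SignVec n) : -(-x) = x := funext fun i => om_neg_neg _

lemma om_vneg_zero : -(0 : SignVec n) = 0 := funext fun _ => rfl

lemma om_vneg_ne_zero {x : SignVec n} (h : x ≠ 0) : -x ≠ 0 := by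
  intro h0
  apply h
  rw [← om_vneg_neg x, h0, om_vneg_zero]

lemma om_ne_zero_iff {x : SignVec n} : x ≠ 0 ↔ ∃ i, x i ≠ 0 := by
  constructor
  · intro h
    by_contra hc
    push_neg at hc
    exact h (funext fun i => hc i)
  · rintro ⟨i, hi⟩ h
    exact hi (by rw [h]; rfl)

lemma om_le_refl (x : SignVec n) : svLe x x := fun _ => Or.inr rfl

lemma om_le_zero (x : SignVec n) : svLe 0 x := fun _ => Or.inl rfl

lemma om_le_trans {x y z : SignVec n} (h1 : svLe x y) (h2 : svLe y z) : svLe x z := by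
  intro i
  rcases h1 i with h | h
  · exact Or.inl h
  · rcases h2 i with h' | h'
    · exact Or.inl (h.trans h')
    · exact Or.inr (h.trans h')

lemma om_le_at {x y : SignVec n} (h : svLe x y) {i : Fin n} (hi : x i ≠ 0) : y i = x i :=
  ((h i).resolve_left hi).symm

lemma om_le_antisymm {x y : SignVec n} (h1 : svLe x y) (h2 : svLe y x) : x = y := by
  funext i
  rcases h1 i with h | h
  · rcases h2 i with h' | h'
    · rw [h, h']
    · rw [h]; exact (h'.trans h).symm
  · exact h

lemma om_comp_left {x y : SignVec n} {i : Fin n} (h : x i ≠ 0) : svComp x y i = x i := by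
  simp [svComp, h]

lemma om_comp_right {x y : SignVec n} {i : Fin n} (h : x i = 0) : svComp x y i = y i := by
  simp [svComp, h]

lemma om_le_comp (x y : SignVec n) : svLe x (svComp x y) := by
  intro i
  by_cases h : x i = 0
  · exact Or.inl h
  · exact Or.inr (om_comp_left h).symm

lemma om_comp_le {x y z : SignVec n} (hx : svLe x z) (hy : svLe y z) : svLe (svComp x y) z := by
  intro i
  by_cases h : x i = 0
  · rw [om_comp_right h]; exact hy i
  · rw [om_comp_left h]; exact hx i

lemma om_zero_mem {V : Set (SignVec n)} (hV : IsCovectorSet V) : 0 ∈ V := hV.1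

lemma om_neg_mem {V : Set (SignVec n)} (hV : IsCovectorSet V) {x : SignVec n} (hx : x ∈ V) :
    -x ∈ V := hV.2.1 x hx

lemma om_comp_mem {V : Set (SignVec n)} (hV : IsCovectorSet V) {x y : SignVec n}
    (hx : x ∈ V) (hy : y ∈ V) : svComp x y ∈ V := hV.2.2.1 x hx y hy

lemma om_elim {V : Set (SignVec n)} (hV : IsCovectorSet V) {X Y : SignVec n}
    (hX : X ∈ V) (hY : Y ∈ V) (hne : X ≠ -Y) {e : Fin n} (he : X e = -(Y e)) (he0 : X e ≠ 0) :
    ∃ Z ∈ V, Z e = 0 ∧ (∀ f, X f = 0 → Y f = 0 → Z f = 0) ∧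
      (∀ f s, s ≠ 0 → (X f = s ∨ Y f = s) → X f ≠ -s → Y f ≠ -s → Z f = s) := by
  obtain ⟨Z, hZ, hZe, hZf⟩ := hV.2.2.2 X hX Y hY hne e he he0
  refine ⟨Z, hZ, hZe, fun f h1 h2 => (hZf f).1 ⟨h1, h2⟩, ?_⟩
  intro f s hs hor hX' hY'
  cases s with
  | zero => exact absurd rfl hs
  | pos => exact (hZf f).2.1 ⟨hor, hX', hY'⟩
  | neg => exact (hZf f).2.2 ⟨hor, by simpa using hX', by simpa using hY'⟩

end OMHelpers

section OMRank

variable {n : ℕ} {V : Set (SignVec n)}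

lemma om_lt_of (h : svLe x y) (hne : x ≠ y) : svLt x y := ⟨h, hne⟩

lemma om_lt_trans {x y z : SignVec n} (h1 : svLt x y) (h2 : svLt y z) : svLt x z := by
  refine ⟨om_le_trans h1.1 h2.1, fun hc => ?_⟩
  subst hc
  exact h1.2 (om_le_antisymm h1.1 h2.1)

lemma om_no4chain (hV : IsCovectorSet V)
    (h2 : ∀ m : ℕ, ∀ c : Fin (m + 1) → SignVec n, (∀ k, c k ∈ V) →
      (∀ k l : Fin (m + 1), k < l → svLt (c k) (c l)) → m ≤ 2)
    {x y z : SignVec n} (hx : x ∈ V) (hy : y ∈ V) (hz : z ∈ V)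
    (h0 : x ≠ 0) (hxy : svLt x y) (hyz : svLt y z) : False := by
  have h0x : svLt 0 x := ⟨om_le_zero x, fun hc => h0 hc.symm⟩
  have h0y : svLt 0 y := om_lt_trans h0x hxy
  have h0z : svLt 0 z := om_lt_trans h0y hyz
  have hxz : svLt x z := om_lt_trans hxy hyz
  have := h2 3 ![0, x, y, z]
    (by
      intro k
      fin_cases k <;> simp [hV.1, hx, hy, hz])
    (by
      intro k l hkl
      fin_cases k <;> fin_cases l <;>
        first
          | exact absurd hkl (by decide)
          | simpa using h0x
          | simpa using h0y
          | simpa using h0z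
          | simpa using hxy
          | simpa using hyz
          | simpa using hxz)
  omega

lemma om_rank_pair (hrk : IsRank V 2) :
    ∃ x y : SignVec n, x ∈ V ∧ y ∈ V ∧ x ≠ 0 ∧ svLt x y := by
  obtain ⟨c, hc, hlt⟩ := hrk.1
  by_cases h0 : c 0 = 0
  · refine ⟨c 1, c 2, hc 1, hc 2, ?_, hlt 1 2 (by decide)⟩
    have := hlt 0 1 (by decide)
    rw [h0] at this
    exact fun hc' => this.2 hc'.symm
  · exact ⟨c 0, c 1, hc 0, hc 1, h0, hlt 0 1 (by decide)⟩

/-- For every coordinate there is a nonzero covector vanishing there (rank-2). -/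
lemma om_exists_null (hV : IsCovectorSet V) (hrk : IsRank V 2) (e : Fin n) :
    ∃ d, d ∈ V ∧ d e = 0 ∧ d ≠ 0 := by
  obtain ⟨x, y, hx, hy, hx0, hxy⟩ := om_rank_pair hrk
  by_cases hxe : x e = 0
  · exact ⟨x, hx, hxe, hx0⟩
  · have hye : y e = x e := om_le_at hxy.1 hxe
    obtain ⟨f, hf⟩ : ∃ f, x f ≠ y f := Function.ne_iff.mp hxy.2
    have hxf : x f = 0 := (hxy.1 f).resolve_right hf
    have hyf : y f ≠ 0 := fun hc => hf (hxf.trans hc.symm)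
    have hne : x ≠ -(-y) := by rw [om_vneg_neg]; exact hxy.2
    obtain ⟨Z, hZ, hZe, _, hZs⟩ := om_elim hV hx (om_neg_mem hV hy) hne
      (e := e) (by rw [om_vneg_apply, hye, om_neg_neg]) hxe
    refine ⟨Z, hZ, hZe, ?_⟩
    have hZf : Z f = -(y f) := by
      apply hZs f (-(y f)) (om_neg_ne_zero _ hyf) (Or.inr rfl)
      · rw [hxf]; exact (om_neg_ne_zero _ (om_neg_ne_zero _ hyf)).symm
      · rw [om_vneg_apply]; exact om_ne_neg_self _ (om_neg_ne_zero _ hyf)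
    rw [om_ne_zero_iff]
    exact ⟨f, by rw [hZf]; exact om_neg_ne_zero _ hyf⟩

/-- No strict pair inside the "vanishing at e" subset, given a covector nonzero at e. -/
lemma om_null_nomax (hV : IsCovectorSet V)
    (h2 : ∀ m : ℕ, ∀ c : Fin (m + 1) → SignVec n, (∀ k, c k ∈ V) →
      (∀ k l : Fin (m + 1), k < l → svLt (c k) (c l)) → m ≤ 2)
    {e : Fin n} {u0 : SignVec n} (hu0 : u0 ∈ V) (hu0e : u0 e ≠ 0)
    {x y : SignVec n} (hx : x ∈ V) (hy : y ∈ V)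
    (hxe : x e = 0) (hye : y e = 0) (hx0 : x ≠ 0) (hxy : svLt x y) : False := by
  have ht : svComp y u0 ∈ V := om_comp_mem hV hy hu0
  have hyt : svLt y (svComp y u0) := by
    refine ⟨om_le_comp y u0, fun hc => ?_⟩
    have : svComp y u0 e = u0 e := om_comp_right hye
    rw [← hc, hye] at this
    exact hu0e this.symm
  exact om_no4chain hV h2 hx hy ht hx0 hxy hyt

lemma om_null_supp (hV : IsCovectorSet V)
    (h2 : ∀ m : ℕ, ∀ c : Fin (m + 1) → SignVec n, (∀ k, c k ∈ V) →
      (∀ k l : Fin (m + 1), k < l → svLt (c k) (c l)) → m ≤ 2)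
    {e : Fin n} {u0 : SignVec n} (hu0 : u0 ∈ V) (hu0e : u0 e ≠ 0)
    {x y : SignVec n} (hx : x ∈ V) (hy : y ∈ V)
    (hxe : x e = 0) (hye : y e = 0) (hx0 : x ≠ 0) :
    ∀ i, x i = 0 → y i = 0 := by
  intro i hi
  have hc : svComp x y ∈ V := om_comp_mem hV hx hy
  have hce : svComp x y e = 0 := by rw [om_comp_right hxe, hye]
  have heq : x = svComp x y := by
    by_contra hne
    exact om_null_nomax hV h2 hu0 hu0e hx hc hxe hce hx0 ⟨om_le_comp x y, hne⟩
  have := congrFun heq i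
  rw [om_comp_right hi] at this
  rw [← this, hi]

/-- Any two nonzero covectors vanishing at a non-loop coordinate agree up to sign. -/
lemma om_pair (hV : IsCovectorSet V)
    (h2 : ∀ m : ℕ, ∀ c : Fin (m + 1) → SignVec n, (∀ k, c k ∈ V) →
      (∀ k l : Fin (m + 1), k < l → svLt (c k) (c l)) → m ≤ 2)
    {e : Fin n} {u0 : SignVec n} (hu0 : u0 ∈ V) (hu0e : u0 e ≠ 0)
    {x y : SignVec n} (hx : x ∈ V) (hy : y ∈ V)
    (hxe : x e = 0) (hye : y e = 0) (hx0 : x ≠ 0) (hy0 : y ≠ 0) :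
    y = x ∨ y = -x := by
  have hsupp : ∀ i, x i = 0 → y i = 0 :=
    om_null_supp hV h2 hu0 hu0e hx hy hxe hye hx0
  have hsupp' : ∀ i, y i = 0 → x i = 0 :=
    om_null_supp hV h2 hu0 hu0e hy hx hye hxe hy0
  by_cases hconf : ∀ i, ¬(x i = -(y i) ∧ x i ≠ 0)
  · left
    funext i
    by_cases hxi : x i = 0
    · rw [hsupp i hxi, hxi]
    · have hyi : y i ≠ 0 := fun hc => hxi (hsupp' i hc)
      have h1 := hconf i
      push_neg at h1
      by_contra hne
      have h2' := om_sr _ _ hyi hxi hne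
      exact hxi (h1 (by rw [h2', om_neg_neg]))
  · push_neg at hconf
    obtain ⟨i0, hi0⟩ := hconf
    rcases hi0 with ⟨hi0c, hi0n⟩
    by_cases hxy : x = -y
    · right
      rw [hxy, om_vneg_neg]
    · exfalso
      obtain ⟨f, hf⟩ : ∃ f, x f ≠ -(y f) := by
        by_contra hc
        push_neg at hc
        exact hxy (funext hc)
      have hxf : x f ≠ 0 := by
        intro hc
        have := hsupp f hc
        rw [hc, this] at hf
        exact hf (by decide)
      have hyf : y f ≠ 0 := fun hc => hxf (hsupp' f hc)
      have hxyf : x f = y f := by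
        by_contra hne
        exact hf (om_sr _ _ hxf hyf hne)
      obtain ⟨Z, hZ, hZi0, hZ0, hZs⟩ := om_elim hV hx hy hxy (e := i0) hi0c hi0n
      have hZe : Z e = 0 := hZ0 e hxe hye
      have hZf : Z f = x f := by
        apply hZs f (x f) hxf (Or.inl rfl) (om_ne_neg_self _ hxf)
        rw [← hxyf]; exact om_ne_neg_self _ hxf
      have hZ0' : Z ≠ 0 := om_ne_zero_iff.mpr ⟨f, by rw [hZf]; exact hxf⟩
      have hZx : svLt Z (svComp Z x) := by
        refine ⟨om_le_comp Z x, fun hc => ?_⟩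
        have : svComp Z x i0 = x i0 := om_comp_right hZi0
        rw [← hc, hZi0] at this
        exact hi0n this.symm
      have hce : svComp Z x e = 0 := by rw [om_comp_right hZe, hxe]
      exact om_null_nomax hV h2 hu0 hu0e hZ (om_comp_mem hV hZ hx) hZe hce hZ0' hZx

end OMRank

section OMEngines

variable {n : ℕ} {V2 : Set (SignVec n)}

/-- Engine for the case of two coordinates where `z2` vanishes. -/
lemma om_engine_alpha (hV2 : IsCovectorSet V2)
    (h2 : ∀ m : ℕ, ∀ c : Fin (m + 1) → SignVec n, (∀ k, c k ∈ V2) →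
      (∀ k l : Fin (m + 1), k < l → svLt (c k) (c l)) → m ≤ 2)
    {z2 : SignVec n} (hz2 : z2 ∈ V2) (hz20 : z2 ≠ 0)
    {a b : Fin n} (hza : z2 a = 0) (hzb : z2 b = 0)
    {u u' : SignVec n} (hu : u ∈ V2) (hu' : u' ∈ V2)
    {s t : SignType} (hs : s ≠ 0) (ht : t ≠ 0)
    (hua : u a = t) (hub : u b = s) (h'a : u' a = -t) (h'b : u' b = s) : False := by
  have hne : u ≠ -u' := by
    intro hc
    have := congrFun hc b
    rw [hub, om_vneg_apply, h'b] at this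
    exact om_ne_neg_self s hs this
  obtain ⟨v, hv, hva, _, hvs⟩ := om_elim hV2 hu hu' hne (e := a)
    (by rw [hua, h'a, om_neg_neg]) (by rw [hua]; exact ht)
  have hvb : v b = s := by
    apply hvs b s hs (Or.inl hub)
    · rw [hub]; exact om_ne_neg_self s hs
    · rw [h'b]; exact om_ne_neg_self s hs
  have hv0 : v ≠ 0 := om_ne_zero_iff.mpr ⟨b, by rw [hvb]; exact hs⟩
  rcases om_pair hV2 h2 hu (by rw [hua]; exact ht) hz2 hv hza hva hz20 hv0 with h | h
  · have := congrFun h b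
    rw [hvb, hzb] at this
    exact hs this
  · have := congrFun h b
    rw [hvb, om_vneg_apply, hzb] at this
    simp at this
    exact hs this

/-- Engine for the case of one non-loop coordinate where `z2` vanishes. -/
lemma om_engine_beta (hV2 : IsCovectorSet V2)
    (h2 : ∀ m : ℕ, ∀ c : Fin (m + 1) → SignVec n, (∀ k, c k ∈ V2) →
      (∀ k l : Fin (m + 1), k < l → svLt (c k) (c l)) → m ≤ 2)
    {z2 : SignVec n} (hz2 : z2 ∈ V2) (hz20 : z2 ≠ 0)
    {g a b : Fin n} (hzg : z2 g = 0) (hza : z2 a ≠ 0) (hzb : z2 b ≠ 0)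
    {y1 y2 : SignVec n} (hy1 : y1 ∈ V2) (hy2 : y2 ∈ V2)
    {s : SignType} (hs : s ≠ 0)
    (h1g : y1 g = s) (h1a : y1 a = z2 a) (h1b : y1 b = -(z2 b))
    (h2g : y2 g = s) (h2a : y2 a = -(z2 a)) (h2b : y2 b = z2 b) : False := by
  have hne : y1 ≠ -(-y2) := by
    rw [om_vneg_neg]
    intro hc
    have := congrFun hc a
    rw [h1a, h2a] at this
    exact om_ne_neg_self _ hza this
  obtain ⟨z, hz, hzg', _, hzs⟩ := om_elim hV2 hy1 (om_neg_mem hV2 hy2) hne (e := g)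
    (by rw [h1g, om_vneg_apply, h2g, om_neg_neg]) (by rw [h1g]; exact hs)
  have hza' : z a = z2 a := by
    apply hzs a (z2 a) hza (Or.inl h1a)
    · rw [h1a]; exact om_ne_neg_self _ hza
    · rw [om_vneg_apply, h2a, om_neg_neg]; exact om_ne_neg_self _ hza
  have hzb' : z b = -(z2 b) := by
    apply hzs b (-(z2 b)) (om_neg_ne_zero _ hzb) (Or.inl h1b)
    · rw [h1b, om_neg_neg]; exact (om_ne_neg_self _ hzb).symm
    · rw [om_vneg_apply, h2b, om_neg_neg]; exact (om_ne_neg_self _ hzb).symm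
  have hz0 : z ≠ 0 := om_ne_zero_iff.mpr ⟨a, by rw [hza']; exact hza⟩
  rcases om_pair hV2 h2 hy1 (by rw [h1g]; exact hs) hz2 hz hzg hzg' hz20 hz0 with h | h
  · have := congrFun h b
    rw [hzb'] at this
    exact om_ne_neg_self _ hzb this.symm
  · have := congrFun h a
    rw [hza', om_vneg_apply] at this
    exact om_ne_neg_self _ hza this

/-- Engine for a cyclic triple. -/
lemma om_engine_gamma (hV2 : IsCovectorSet V2)
    (h2 : ∀ m : ℕ, ∀ c : Fin (m + 1) → SignVec n, (∀ k, c k ∈ V2) →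
      (∀ k l : Fin (m + 1), k < l → svLt (c k) (c l)) → m ≤ 2)
    {z2 : SignVec n} (hz2 : z2 ∈ V2)
    {g a b : Fin n} (hzg : z2 g ≠ 0) (hza : z2 a ≠ 0) (hzb : z2 b ≠ 0)
    {y1 y2 ys : SignVec n} (hy1 : y1 ∈ V2) (hy2 : y2 ∈ V2) (hys : ys ∈ V2)
    (h1g : y1 g = z2 g) (h1a : y1 a = z2 a) (h1b : y1 b = -(z2 b))
    (h2g : y2 g = z2 g) (h2a : y2 a = -(z2 a)) (h2b : y2 b = z2 b)
    (hsg : ys g = z2 g) (hsa : ys a = -(z2 a)) (hsb : ys b = -(z2 b)) : False := by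
  -- z = elim(y1, -y2) at g : (g:0, a:z2a, b:-z2b)
  have hne1 : y1 ≠ -(-y2) := by
    rw [om_vneg_neg]
    intro hc
    have := congrFun hc a
    rw [h1a, h2a] at this
    exact om_ne_neg_self _ hza this
  obtain ⟨z, hz, hzg', _, hzs⟩ := om_elim hV2 hy1 (om_neg_mem hV2 hy2) hne1 (e := g)
    (by rw [h1g, om_vneg_apply, h2g, om_neg_neg]) (by rw [h1g]; exact hzg)
  have hza' : z a = z2 a := by
    apply hzs a (z2 a) hza (Or.inl h1a)
    · rw [h1a]; exact om_ne_neg_self _ hza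
    · rw [om_vneg_apply, h2a, om_neg_neg]; exact om_ne_neg_self _ hza
  have hzb' : z b = -(z2 b) := by
    apply hzs b (-(z2 b)) (om_neg_ne_zero _ hzb) (Or.inl h1b)
    · rw [h1b, om_neg_neg]; exact (om_ne_neg_self _ hzb).symm
    · rw [om_vneg_apply, h2b, om_neg_neg]; exact (om_ne_neg_self _ hzb).symm
  -- w' = elim(y2, z2) at a : (a:0, g:z2g, b:z2b)
  have hne2 : y2 ≠ -z2 := by
    intro hc
    have := congrFun hc g
    rw [h2g, om_vneg_apply] at this
    exact om_ne_neg_self _ hzg this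
  obtain ⟨w, hw, hwa, _, hws⟩ := om_elim hV2 hy2 hz2 hne2 (e := a)
    (by rw [h2a]) (by rw [h2a]; exact om_neg_ne_zero _ hza)
  have hwg : w g = z2 g := by
    apply hws g (z2 g) hzg (Or.inl h2g)
    · rw [h2g]; exact om_ne_neg_self _ hzg
    · exact om_ne_neg_self _ hzg
  have hwb : w b = z2 b := by
    apply hws b (z2 b) hzb (Or.inl h2b)
    · rw [h2b]; exact om_ne_neg_self _ hzb
    · exact om_ne_neg_self _ hzb
  -- v = elim(ys, z) at a : (a:0, g:z2g, b:-z2b)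
  have hne3 : ys ≠ -z := by
    intro hc
    have := congrFun hc g
    rw [hsg, om_vneg_apply, hzg'] at this
    simp at this
    exact hzg this
  obtain ⟨v, hv, hva, _, hvs⟩ := om_elim hV2 hys hz hne3 (e := a)
    (by rw [hsa, hza']) (by rw [hsa]; exact om_neg_ne_zero _ hza)
  have hvg : v g = z2 g := by
    apply hvs g (z2 g) hzg (Or.inl hsg)
    · rw [hsg]; exact om_ne_neg_self _ hzg
    · rw [hzg']; exact (om_neg_ne_zero _ hzg).symm
  have hvb : v b = -(z2 b) := by
    apply hvs b (-(z2 b)) (om_neg_ne_zero _ hzb) (Or.inl hsb)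
    · rw [hsb, om_neg_neg]; exact (om_ne_neg_self _ hzb).symm
    · rw [hzb', om_neg_neg]; exact (om_ne_neg_self _ hzb).symm
  -- contradiction via uniqueness in V2_a
  have hw0 : w ≠ 0 := om_ne_zero_iff.mpr ⟨g, by rw [hwg]; exact hzg⟩
  have hv0 : v ≠ 0 := om_ne_zero_iff.mpr ⟨g, by rw [hvg]; exact hzg⟩
  rcases om_pair hV2 h2 hy1 (by rw [h1a]; exact hza) hw hv hwa hva hw0 hv0 with h | h
  · have := congrFun h b
    rw [hvb, hwb] at this
    exact om_ne_neg_self _ hzb this.symm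
  · have := congrFun h g
    rw [hvg, om_vneg_apply, hwg] at this
    exact om_ne_neg_self _ hzg this

/-- Engine for two antiparallel pairs. -/
lemma om_engine_two (hV2 : IsCovectorSet V2)
    (h2 : ∀ m : ℕ, ∀ c : Fin (m + 1) → SignVec n, (∀ k, c k ∈ V2) →
      (∀ k l : Fin (m + 1), k < l → svLt (c k) (c l)) → m ≤ 2)
    {z2 : SignVec n} (hz2 : z2 ∈ V2)
    {e f g h : Fin n} (hze : z2 e ≠ 0) (hzf : z2 f ≠ 0) (hzg : z2 g ≠ 0) (hzh : z2 h ≠ 0)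
    {ya yb yc : SignVec n} (hya : ya ∈ V2) (hyb : yb ∈ V2) (hyc : yc ∈ V2)
    (hae : ya e = z2 e) (haf : ya f = -(z2 f)) (hag : ya g = z2 g) (hah : ya h = -(z2 h))
    (hbe : yb e = -(z2 e)) (hbf : yb f = z2 f) (hbg : yb g = z2 g) (hbh : yb h = -(z2 h))
    (hce : yc e = -(z2 e)) (hcf : yc f = z2 f) (hcg : yc g = -(z2 g)) (hch : yc h = z2 h) :
    False := by
  -- r = elim(yb, yc) at h : (h:0, e:-z2e, f:z2f)
  have hne1 : yb ≠ -yc := by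
    intro hc
    have := congrFun hc e
    rw [hbe, om_vneg_apply, hce, om_neg_neg] at this
    exact om_ne_neg_self _ hze this.symm
  obtain ⟨r, hr, hrh, _, hrs⟩ := om_elim hV2 hyb hyc hne1 (e := h)
    (by rw [hbh, hch]) (by rw [hbh]; exact om_neg_ne_zero _ hzh)
  have hre : r e = -(z2 e) := by
    apply hrs e (-(z2 e)) (om_neg_ne_zero _ hze) (Or.inl hbe)
    · rw [hbe, om_neg_neg]; exact (om_ne_neg_self _ hze).symm
    · rw [hce, om_neg_neg]; exact (om_ne_neg_self _ hze).symm
  have hrf : r f = z2 f := by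
    apply hrs f (z2 f) hzf (Or.inl hbf)
    · rw [hbf]; exact om_ne_neg_self _ hzf
    · rw [hcf]; exact om_ne_neg_self _ hzf
  -- s' = elim(ya, yb) at e : (e:0, g:z2g, h:-z2h)
  have hne2 : ya ≠ -yb := by
    intro hc
    have := congrFun hc g
    rw [hag, om_vneg_apply, hbg] at this
    exact om_ne_neg_self _ hzg this
  obtain ⟨s', hs', hse, _, hss⟩ := om_elim hV2 hya hyb hne2 (e := e)
    (by rw [hae, hbe, om_neg_neg]) (by rw [hae]; exact hze)
  have hsg : s' g = z2 g := by
    apply hss g (z2 g) hzg (Or.inl hag)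
    · rw [hag]; exact om_ne_neg_self _ hzg
    · rw [hbg]; exact om_ne_neg_self _ hzg
  have hsh : s' h = -(z2 h) := by
    apply hss h (-(z2 h)) (om_neg_ne_zero _ hzh) (Or.inl hah)
    · rw [hah, om_neg_neg]; exact (om_ne_neg_self _ hzh).symm
    · rw [hbh, om_neg_neg]; exact (om_ne_neg_self _ hzh).symm
  -- w = elim(r, z2) at e : (e:0, f:z2f, h:z2h)
  have hne3 : r ≠ -z2 := by
    intro hc
    have := congrFun hc f
    rw [hrf, om_vneg_apply] at this
    exact om_ne_neg_self _ hzf this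
  obtain ⟨w, hw, hwe, _, hws⟩ := om_elim hV2 hr hz2 hne3 (e := e)
    (by rw [hre]) (by rw [hre]; exact om_neg_ne_zero _ hze)
  have hwf : w f = z2 f := by
    apply hws f (z2 f) hzf (Or.inl hrf)
    · rw [hrf]; exact om_ne_neg_self _ hzf
    · exact om_ne_neg_self _ hzf
  have hwh : w h = z2 h := by
    apply hws h (z2 h) hzh (Or.inr rfl)
    · rw [hrh]; exact (om_neg_ne_zero _ hzh).symm
    · exact om_ne_neg_self _ hzh
  -- w3 = elim(yb, z2) at e : (e:0, f:z2f, g:z2g)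
  have hne4 : yb ≠ -z2 := by
    intro hc
    have := congrFun hc f
    rw [hbf, om_vneg_apply] at this
    exact om_ne_neg_self _ hzf this
  obtain ⟨w3, hw3, hw3e, _, hw3s⟩ := om_elim hV2 hyb hz2 hne4 (e := e)
    (by rw [hbe]) (by rw [hbe]; exact om_neg_ne_zero _ hze)
  have hw3f : w3 f = z2 f := by
    apply hw3s f (z2 f) hzf (Or.inl hbf)
    · rw [hbf]; exact om_ne_neg_self _ hzf
    · exact om_ne_neg_self _ hzf
  have hw3g : w3 g = z2 g := by
    apply hw3s g (z2 g) hzg (Or.inl hbg)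
    · rw [hbg]; exact om_ne_neg_self _ hzg
    · exact om_ne_neg_self _ hzg
  -- uniqueness in V2_e
  have hw0 : w ≠ 0 := om_ne_zero_iff.mpr ⟨f, by rw [hwf]; exact hzf⟩
  have hs0 : s' ≠ 0 := om_ne_zero_iff.mpr ⟨g, by rw [hsg]; exact hzg⟩
  have hw30 : w3 ≠ 0 := om_ne_zero_iff.mpr ⟨f, by rw [hw3f]; exact hzf⟩
  have hwg : w g = -(z2 g) := by
    rcases om_pair hV2 h2 hya (by rw [hae]; exact hze) hs' hw hse hwe hs0 hw0 with hh | hh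
    · exfalso
      have := congrFun hh h
      rw [hwh, hsh] at this
      exact om_ne_neg_self _ hzh this
    · have := congrFun hh g
      rw [om_vneg_apply, hsg] at this
      exact this
  rcases om_pair hV2 h2 hya (by rw [hae]; exact hze) hw hw3 hwe hw3e hw0 hw30 with hh | hh
  · have := congrFun hh g
    rw [hw3g, hwg] at this
    exact om_ne_neg_self _ hzg this
  · have := congrFun hh f
    rw [hw3f, om_vneg_apply, hwf] at this
    exact om_ne_neg_self _ hzf this

end OMEngines

section OMGamma

variable {n : ℕ} {V1 V2 : Set (SignVec n)} {z2 : SignVec n}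

lemma om_sr2 : ∀ a b : SignType, a ≠ 0 → b ≠ 0 → a ≠ -b → a = b := by decide

lemma om_dich : ∀ a b : SignType, a ≠ 0 → b ≠ 0 → a = b ∨ a = -b := by decide

lemma om_neg_eq_zero : ∀ a : SignType, -a = 0 → a = 0 := by decide

lemma om_pin {x y : SignVec n} (hle : svLe x y) {i : Fin n} {s : SignType}
    (hs : s ≠ 0) (hx : x i = s) : y i = s :=
  (om_le_at hle (by rw [hx]; exact hs)).trans hx

/-- The heart of the argument: when every coordinate where `z2` vanishes is a loop of `V1`. -/
lemma om_gamma (hV1 : IsCovectorSet V1) (h1r : IsRank V1 2)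
    (hV2 : IsCovectorSet V2)
    (h2u : ∀ m : ℕ, ∀ c : Fin (m + 1) → SignVec n, (∀ k, c k ∈ V2) →
      (∀ k l : Fin (m + 1), k < l → svLt (c k) (c l)) → m ≤ 2)
    (hz2 : z2 ∈ V2)
    (hdom : ∀ x ∈ V1, ∃ y ∈ V2, svLe x y)
    (hloop : ∀ g : Fin n, z2 g = 0 → ∀ x ∈ V1, x g = 0)
    (hmix : ∀ x, x ∈ V1 → x ≠ 0 →
      (∃ a, x a = z2 a ∧ z2 a ≠ 0) ∧ (∃ b, x b = -(z2 b) ∧ z2 b ≠ 0)) :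
    False := by
  have h1u := h1r.2
  -- two-bit configurations are impossible
  have tb : ∀ (x y z : Fin n) (P1 P2 : SignVec n), P1 ∈ V1 → P2 ∈ V1 →
      z2 x ≠ 0 → z2 y ≠ 0 → z2 z ≠ 0 →
      P1 x = 0 → P1 z = z2 z → P1 y = -(z2 y) →
      P2 y = 0 → P2 x = z2 x → P2 z = -(z2 z) → False := by
    intro x y z P1 P2 hP1 hP2 hzx hzy hzz h1x h1z h1y h2y h2x h2z
    obtain ⟨y1, hy1, hle1⟩ := hdom _ (om_comp_mem hV1 hP1 hP2)
    obtain ⟨y2, hy2, hle2⟩ := hdom _ (om_comp_mem hV1 (om_neg_mem hV1 hP1) hP2)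
    obtain ⟨ys, hys, hles⟩ := hdom _ (om_comp_mem hV1 hP2 hP1)
    have c1x : svComp P1 P2 x = z2 x := by rw [om_comp_right h1x]; exact h2x
    have c1z : svComp P1 P2 z = z2 z := by
      rw [om_comp_left (show P1 z ≠ 0 by rw [h1z]; exact hzz)]; exact h1z
    have c1y : svComp P1 P2 y = -(z2 y) := by
      rw [om_comp_left (show P1 y ≠ 0 by rw [h1y]; exact om_neg_ne_zero _ hzy)]; exact h1y
    have hnP1x : (-P1) x = 0 := by rw [om_vneg_apply, h1x]; rfl
    have hnP1z : (-P1) z = -(z2 z) := by rw [om_vneg_apply, h1z]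
    have hnP1y : (-P1) y = z2 y := by rw [om_vneg_apply, h1y, om_neg_neg]
    have c2x : svComp (-P1) P2 x = z2 x := by rw [om_comp_right hnP1x]; exact h2x
    have c2z : svComp (-P1) P2 z = -(z2 z) := by
      rw [om_comp_left (show (-P1) z ≠ 0 by rw [hnP1z]; exact om_neg_ne_zero _ hzz)]
      exact hnP1z
    have c2y : svComp (-P1) P2 y = z2 y := by
      rw [om_comp_left (show (-P1) y ≠ 0 by rw [hnP1y]; exact hzy)]; exact hnP1y
    have csx : svComp P2 P1 x = z2 x := by
      rw [om_comp_left (show P2 x ≠ 0 by rw [h2x]; exact hzx)]; exact h2x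
    have csz : svComp P2 P1 z = -(z2 z) := by
      rw [om_comp_left (show P2 z ≠ 0 by rw [h2z]; exact om_neg_ne_zero _ hzz)]; exact h2z
    have csy : svComp P2 P1 y = -(z2 y) := by rw [om_comp_right h2y]; exact h1y
    exact om_engine_gamma hV2 h2u hz2 hzx hzz hzy hy1 hy2 hys
      (om_pin hle1 hzx c1x) (om_pin hle1 hzz c1z) (om_pin hle1 (om_neg_ne_zero _ hzy) c1y)
      (om_pin hle2 hzx c2x) (om_pin hle2 (om_neg_ne_zero _ hzz) c2z) (om_pin hle2 hzy c2y)
      (om_pin hles hzx csx) (om_pin hles (om_neg_ne_zero _ hzz) csz)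
      (om_pin hles (om_neg_ne_zero _ hzy) csy)
  -- a nonzero covector of V1 and a coordinate where it is nonzero
  obtain ⟨xs, ys', hxs, hys', hxs0, hltc⟩ := om_rank_pair h1r
  obtain ⟨e0, he0⟩ : ∃ i, xs i ≠ 0 := om_ne_zero_iff.mp hxs0
  by_cases hAnti : ∃ e f x0, x0 ∈ V1 ∧ e ≠ f ∧ (∀ x ∈ V1, x e = 0 → x f = 0) ∧
      (∀ x ∈ V1, x f = 0 → x e = 0) ∧ x0 e = z2 e ∧ x0 f = -(z2 f) ∧ z2 e ≠ 0 ∧ z2 f ≠ 0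
  · -- antiparallel pair exists
    obtain ⟨e, f, x0, hx0, hef, hPef, hPfe, h0e, h0f, hze, hzf⟩ := hAnti
    -- LINK : any covector with value z2 e at e has value -(z2 f) at f
    have link : ∀ k ∈ V1, k e = z2 e → k f = -(z2 f) := by
      intro k hk hke
      by_contra hkf
      have hkf0 : k f ≠ 0 := fun hc => hze (by rw [← hke]; exact hPfe k hk hc)
      have hkf1 : k f = z2 f := om_sr2 _ _ hkf0 hzf hkf
      have hne : k ≠ -(-x0) := by
        rw [om_vneg_neg]
        intro hc
        have := congrFun hc f
        rw [hkf1, h0f] at this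
        exact om_ne_neg_self _ hzf this
      obtain ⟨Z, hZ, hZe, _, hZs⟩ := om_elim hV1 hk (om_neg_mem hV1 hx0) hne (e := e)
        (by rw [hke, om_vneg_apply, h0e, om_neg_neg]) (by rw [hke]; exact hze)
      have hZf : Z f = z2 f := by
        apply hZs f (z2 f) hzf (Or.inl hkf1)
        · rw [hkf1]; exact om_ne_neg_self _ hzf
        · rw [om_vneg_apply, h0f, om_neg_neg]; exact om_ne_neg_self _ hzf
      exact hzf (by rw [← hZf]; exact hPef Z hZ hZe)
    -- d := generator of V1_e, normalized at some p with d p = z2 p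
    obtain ⟨d0, hd0, hd0e, hd00⟩ := om_exists_null hV1 h1r e
    obtain ⟨p, hd0p⟩ : ∃ i, d0 i ≠ 0 := om_ne_zero_iff.mp hd00
    have hd0f : d0 f = 0 := hPef d0 hd0 hd0e
    have hpe : p ≠ e := fun hc => hd0p (by rw [hc, hd0e])
    have hpf : p ≠ f := fun hc => hd0p (by rw [hc, hd0f])
    have hzp : z2 p ≠ 0 := fun hc => hd0p (hloop p hc d0 hd0)
    obtain ⟨d, hd, hde, hdf, hd0', hdp⟩ :
        ∃ d, d ∈ V1 ∧ d e = 0 ∧ d f = 0 ∧ d ≠ 0 ∧ d p = z2 p := by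
      rcases om_dich _ _ hd0p hzp with h | h
      · exact ⟨d0, hd0, hd0e, hd0f, hd00, h⟩
      · exact ⟨-d0, om_neg_mem hV1 hd0, by rw [om_vneg_apply, hd0e]; rfl,
          by rw [om_vneg_apply, hd0f]; rfl, om_vneg_ne_zero hd00,
          by rw [om_vneg_apply, h, om_neg_neg]⟩
    obtain ⟨-, ⟨q, hdq, hzq⟩⟩ := hmix d hd hd0'
    have hqe : q ≠ e := fun hc => (om_neg_ne_zero _ hzq) (by rw [← hdq, hc]; exact hde)
    have hqf : q ≠ f := fun hc => (om_neg_ne_zero _ hzq) (by rw [← hdq, hc]; exact hdf)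
    have hqp : q ≠ p := fun hc => om_ne_neg_self _ hzp (hdp.symm.trans (hc ▸ hdq))
    -- k := generator of V1_p, normalized with k e = z2 e
    obtain ⟨k0, hk0, hk0p, hk00⟩ := om_exists_null hV1 h1r p
    have hk0e : k0 e ≠ 0 := by
      intro hc
      rcases om_pair hV1 h1u hx0 (by rw [h0e]; exact hze) hd hk0 hde hc hd0' hk00 with h | h
      · exact hzp (by rw [← hdp, ← congrFun h p]; exact hk0p)
      · exact om_neg_ne_zero _ hzp
          (by rw [← hdp, ← om_vneg_apply, ← congrFun h p]; exact hk0p)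
    obtain ⟨k, hk, hkp, hk0', hke⟩ :
        ∃ k, k ∈ V1 ∧ k p = 0 ∧ k ≠ 0 ∧ k e = z2 e := by
      rcases om_dich _ _ hk0e hze with h | h
      · exact ⟨k0, hk0, hk0p, hk00, h⟩
      · exact ⟨-k0, om_neg_mem hV1 hk0, by rw [om_vneg_apply, hk0p]; rfl,
          om_vneg_ne_zero hk00, by rw [om_vneg_apply, h, om_neg_neg]⟩
    have hkf : k f = -(z2 f) := link k hk hke
    by_cases hkq : k q = 0
    · -- two antiparallel pairs : engine two
      obtain ⟨ya, hya, hlea⟩ := hdom _ (om_comp_mem hV1 hd hk)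
      obtain ⟨yb, hyb, hleb⟩ := hdom _ (om_comp_mem hV1 hd (om_neg_mem hV1 hk))
      obtain ⟨yc, hyc, hlec⟩ := hdom _ (om_neg_mem hV1 (om_comp_mem hV1 hd hk))
      apply om_engine_two hV2 h2u hz2 hze hzf hzp hzq hya hyb hyc
        (om_pin hlea hze (by rw [om_comp_right hde]; exact hke))
        (om_pin hlea (om_neg_ne_zero _ hzf) (by rw [om_comp_right hdf]; exact hkf))
        (om_pin hlea hzp (by rw [om_comp_left (by rw [hdp]; exact hzp)]; exact hdp))
        (om_pin hlea (om_neg_ne_zero _ hzq)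
          (by rw [om_comp_left (by rw [hdq]; exact om_neg_ne_zero _ hzq)]; exact hdq))
        (om_pin hleb (om_neg_ne_zero _ hze)
          (by rw [om_comp_right hde, om_vneg_apply, hke]))
        (om_pin hleb hzf
          (by rw [om_comp_right hdf, om_vneg_apply, hkf, om_neg_neg]))
        (om_pin hleb hzp (by rw [om_comp_left (by rw [hdp]; exact hzp)]; exact hdp))
        (om_pin hleb (om_neg_ne_zero _ hzq)
          (by rw [om_comp_left (by rw [hdq]; exact om_neg_ne_zero _ hzq)]; exact hdq))
        (om_pin hlec (om_neg_ne_zero _ hze)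
          (by rw [om_vneg_apply, om_comp_right hde, hke]))
        (om_pin hlec hzf
          (by rw [om_vneg_apply, om_comp_right hdf, hkf, om_neg_neg]))
        (om_pin hlec (om_neg_ne_zero _ hzp)
          (by rw [om_vneg_apply, om_comp_left (by rw [hdp]; exact hzp), hdp]))
        (om_pin hlec hzq
          (by rw [om_vneg_apply, om_comp_left (by rw [hdq]; exact om_neg_ne_zero _ hzq),
            hdq, om_neg_neg]))
    · rcases om_dich _ _ hkq hzq with h | h
      · -- k q = z2 q : two-bit at (f, p, q) with P1 = -d, P2 = -k
        apply tb f p q (-d) (-k) (om_neg_mem hV1 hd) (om_neg_mem hV1 hk) hzf hzp hzq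
        · rw [om_vneg_apply, hdf]; rfl
        · rw [om_vneg_apply, hdq, om_neg_neg]
        · rw [om_vneg_apply, hdp]
        · rw [om_vneg_apply, hkp]; rfl
        · rw [om_vneg_apply, hkf, om_neg_neg]
        · rw [om_vneg_apply, h]
      · -- k q = -(z2 q) : two-bit at (e, p, q) with P1 = -d, P2 = k
        apply tb e p q (-d) k (om_neg_mem hV1 hd) hk hze hzp hzq
        · rw [om_vneg_apply, hde]; rfl
        · rw [om_vneg_apply, hdq, om_neg_neg]
        · rw [om_vneg_apply, hdp]
        · exact hkp
        · exact hke
        · exact h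
  · -- no antiparallel pair : build an infinite strictly growing family
    have chase : ∀ k : ℕ, ∃ (R : Finset (Fin n)) (c : Fin n) (m w : SignVec n),
        R.card = k ∧ c ∉ R ∧ z2 c ≠ 0 ∧ (∀ r ∈ R, z2 r ≠ 0) ∧
        m ∈ V1 ∧ m ≠ 0 ∧ m c = 0 ∧ (∀ r ∈ R, m r = z2 r) ∧ w ∈ V1 ∧ w c ≠ 0 := by
      intro k
      induction k with
      | zero =>
        obtain ⟨d, hd, hde, hd0⟩ := om_exists_null hV1 h1r e0
        exact ⟨∅, e0, d, xs, by simp, by simp,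
          fun hc => he0 (hloop _ hc _ hxs), by simp, hd, hd0, hde, by simp, hxs, he0⟩
      | succ k ih =>
        obtain ⟨R, c, m, w, hcard, hcR, hzc, hzR, hm, hm0, hmc, hmR, hw, hwc⟩ := ih
        obtain ⟨-, ⟨c', hmc', hzc'⟩⟩ := hmix m hm hm0
        have hc'c : c' ≠ c := fun hc => (om_neg_ne_zero _ hzc') (by rw [← hmc', hc, hmc])
        have hc'R : c' ∉ R := fun hc =>
          om_ne_neg_self _ hzc' (((hmR c' hc).symm.trans hmc'))
        obtain ⟨m'', hm'', hm''c', hm''0⟩ := om_exists_null hV1 h1r c'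
        have hm''c : m'' c ≠ 0 := by
          intro hc
          rcases om_pair hV1 h1u hw hwc hm hm'' hmc hc hm0 hm''0 with h | h
          · apply om_neg_ne_zero _ hzc'
            have h2 := congrFun h c'
            rw [hm''c', hmc'] at h2
            exact h2.symm
          · apply hzc'
            have h2 := congrFun h c'
            rw [hm''c', om_vneg_apply, hmc', om_neg_neg] at h2
            exact h2.symm
        obtain ⟨m', hm', hm'c', hm'0, hm'c⟩ :
            ∃ m', m' ∈ V1 ∧ m' c' = 0 ∧ m' ≠ 0 ∧ m' c = z2 c := by
          rcases om_dich _ _ hm''c hzc with h | h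
          · exact ⟨m'', hm'', hm''c', hm''0, h⟩
          · exact ⟨-m'', om_neg_mem hV1 hm'', by rw [om_vneg_apply, hm''c']; rfl,
              om_vneg_ne_zero hm''0, by rw [om_vneg_apply, h, om_neg_neg]⟩
        have hmcnz : m c' ≠ 0 := by rw [hmc']; exact om_neg_ne_zero _ hzc'
        have hm'R : ∀ r ∈ R, m' r = z2 r := by
          intro r hr
          have hzr := hzR r hr
          have hmr := hmR r hr
          have hm'r0 : m' r ≠ 0 := by
            intro h0
            -- this would give an antiparallel pair (r, c')
            apply hAnti
            refine ⟨r, c', m, hm, fun hc => hc'R (hc ▸ hr), ?_, ?_, hmr, hmc', hzr, hzc'⟩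
            · -- Par r c'
              obtain ⟨k', hk', hk'r, hk'0⟩ := om_exists_null hV1 h1r r
              have hk'c' : k' c' = 0 := by
                rcases om_pair hV1 h1u hm (by rw [hmr]; exact hzr) hk' hm' hk'r h0
                  hk'0 hm'0 with h | h
                · rw [← congrFun h c']; exact hm'c'
                · have h2 := congrFun h c'
                  rw [hm'c', om_vneg_apply] at h2
                  exact om_neg_eq_zero _ h2.symm
              intro x hx hxr
              by_cases hx0 : x = 0
              · rw [hx0]; rfl
              · rcases om_pair hV1 h1u hm (by rw [hmr]; exact hzr) hk' hx hk'r hxr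
                  hk'0 hx0 with h | h
                · rw [congrFun h c', hk'c']
                · rw [congrFun h c', om_vneg_apply, hk'c']; rfl
            · -- Par c' r
              intro x hx hxc'
              by_cases hx0 : x = 0
              · rw [hx0]; rfl
              · rcases om_pair hV1 h1u hm hmcnz hm' hx hm'c' hxc' hm'0 hx0 with h | h
                · rw [congrFun h r, h0]
                · rw [congrFun h r, om_vneg_apply, h0]; rfl
          rcases om_dich _ _ hm'r0 hzr with h | h
          · exact h
          · exact absurd (tb c c' r m m' hm hm' hzc hzc' hzr hmc hmr hmc' hm'c' hm'c h) id
        refine ⟨insert c R, c', m', m, ?_, ?_, hzc', ?_, hm', hm'0, hm'c', ?_, hm, hmcnz⟩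
        · rw [Finset.card_insert_of_notMem hcR, hcard]
        · simp only [Finset.mem_insert, not_or]
          exact ⟨hc'c, hc'R⟩
        · intro r hr
          rcases Finset.mem_insert.mp hr with h | h
          · rw [h]; exact hzc
          · exact hzR r h
        · intro r hr
          rcases Finset.mem_insert.mp hr with h | h
          · rw [h]; exact hm'c
          · exact hm'R r h
    obtain ⟨R, -, -, -, hcard, -⟩ := chase (n + 1)
    have hle := Finset.card_le_univ R
    rw [hcard] at hle
    simp [Fintype.card_fin] at hle

end OMGamma

section OMMain

variable {n : ℕ}

lemma om_fold {V1 : Set (SignVec n)} (hV1 : IsCovectorSet V1) (z2 : SignVec n) :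
    ∀ L : List (SignVec n), (∀ x ∈ L, x ∈ V1 ∧ svLe x z2) →
      (L.foldr svComp 0) ∈ V1 ∧ svLe (L.foldr svComp 0) z2 ∧
      ∀ x ∈ L, ∀ i, x i ≠ 0 → (L.foldr svComp 0) i ≠ 0 := by
  intro L
  induction L with
  | nil =>
    intro _
    exact ⟨hV1.1, om_le_zero z2, by simp⟩
  | cons a L ih =>
    intro hL
    have ha := hL a (by simp)
    have hL' : ∀ x ∈ L, x ∈ V1 ∧ svLe x z2 := fun x hx => hL x (List.mem_cons_of_mem a hx)
    obtain ⟨ih1, ih2, ih3⟩ := ih hL'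
    simp only [List.foldr_cons]
    refine ⟨om_comp_mem hV1 ha.1 ih1, om_comp_le ha.2 ih2, ?_⟩
    intro x hx i hxi
    rcases List.mem_cons.mp hx with h | h
    · subst h
      rw [om_comp_left hxi]
      exact hxi
    · by_cases hai : a i = 0
      · rw [om_comp_right hai]
        exact ih3 x h i hxi
      · rw [om_comp_left hai]
        exact hai

theorem exists_max_covector_below' (n : ℕ) (V1 V2 : Set (SignVec n))
    (h1 : IsCovectorSet V1) (h1r : IsRank V1 2)
    (h2 : IsCovectorSet V2) (h2r : IsRank V2 2)
    (hlt : weakLt V1 V2)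
    (z2 : SignVec n) (hz2 : z2 ∈ V2) (hz2ne : z2 ≠ 0) :
    ∃ m, (m ∈ V1 ∧ m ≠ 0 ∧ svLe m z2) ∧
      ∀ z, z ∈ V1 → z ≠ 0 → svLe z z2 → svLe z m := by
  classical
  -- Step 1: the set A is nonempty
  have hAne : ∃ z, z ∈ V1 ∧ z ≠ 0 ∧ svLe z z2 := by
    by_contra hA
    push_neg at hA
    have hmix : ∀ x, x ∈ V1 → x ≠ 0 → (∀ i, z2 i = 0 → x i = 0) →
        (∃ a, x a = z2 a ∧ z2 a ≠ 0) ∧ (∃ b, x b = -(z2 b) ∧ z2 b ≠ 0) := by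
      intro x hx hx0 hxZ
      constructor
      · have h := hA (-x) (om_neg_mem h1 hx) (om_vneg_ne_zero hx0)
        rw [svLe] at h
        push_neg at h
        obtain ⟨i, hi⟩ := h
        rw [sgnLe] at hi
        push_neg at hi
        have hxi : x i ≠ 0 := fun hc => hi.1 (by rw [om_vneg_apply, hc]; rfl)
        have hzi : z2 i ≠ 0 := fun hc => hxi (hxZ i hc)
        have := om_sr _ _ (fun hc => hi.1 (by rw [om_vneg_apply] at hc ⊢; exact hc)) hzi hi.2
        rw [om_vneg_apply] at this
        exact ⟨i, by rw [← om_neg_neg (x i), this, om_neg_neg], hzi⟩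
      · have h := hA x hx hx0
        rw [svLe] at h
        push_neg at h
        obtain ⟨i, hi⟩ := h
        rw [sgnLe] at hi
        push_neg at hi
        have hzi : z2 i ≠ 0 := fun hc => hi.1 (hxZ i hc)
        exact ⟨i, om_sr _ _ hi.1 hzi hi.2, hzi⟩
    by_cases hα : ∃ (a b : Fin n) (x x' : SignVec n), z2 a = 0 ∧ z2 b = 0 ∧
        x ∈ V1 ∧ x a = 0 ∧ x b ≠ 0 ∧ x' ∈ V1 ∧ x' a ≠ 0 ∧ x' b = 0
    · obtain ⟨a, b, x, x', hza, hzb, hx, hxa, hxb, hx', h'a, h'b⟩ := hα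
      obtain ⟨u, hu, hleu⟩ := hlt.1 _ (om_comp_mem h1 hx' hx)
      obtain ⟨u', hu', hleu'⟩ := hlt.1 _ (om_comp_mem h1 (om_neg_mem h1 hx') hx)
      apply om_engine_alpha h2 h2r.2 hz2 hz2ne hza hzb hu hu'
        (s := x b) (t := x' a) hxb h'a
      · exact om_pin hleu h'a (by rw [om_comp_left h'a])
      · exact om_pin hleu hxb (by rw [om_comp_right h'b])
      · exact om_pin hleu' (om_neg_ne_zero _ h'a)
          (by rw [om_comp_left (show (-x') a ≠ 0 by
            rw [om_vneg_apply]; exact om_neg_ne_zero _ h'a), om_vneg_apply])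
      · exact om_pin hleu' hxb
          (by rw [om_comp_right (show (-x') b = 0 by rw [om_vneg_apply, h'b]; rfl)])
    · by_cases hβ : ∃ (g : Fin n) (u : SignVec n), z2 g = 0 ∧ u ∈ V1 ∧ u g ≠ 0
      · obtain ⟨g, u, hzg, hu, hug⟩ := hβ
        obtain ⟨d, hd, hde, hd0⟩ := om_exists_null h1 h1r g
        have hdZ : ∀ h', z2 h' = 0 → d h' = 0 := by
          intro h' hzh'
          by_contra hdh
          obtain ⟨k, hk, hkh, hk0⟩ := om_exists_null h1 h1r h'
          by_cases hkg : k g = 0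
          · rcases om_pair h1 h1r.2 hu hug hd hk hde hkg hd0 hk0 with h | h
            · exact hdh (by rw [← congrFun h h']; exact hkh)
            · apply hdh
              have h2' := congrFun h h'
              rw [hkh, om_vneg_apply] at h2'
              exact om_neg_eq_zero _ h2'.symm
          · exact hα ⟨g, h', d, k, hzg, hzh', hd, hde, hdh, hk, hkg, hkh⟩
        obtain ⟨⟨a, hda, hza⟩, ⟨b, hdb, hzb⟩⟩ :=
          hmix d hd hd0 (fun i hi => hdZ i hi)
        obtain ⟨y1, hy1, hle1⟩ := hlt.1 _ (om_comp_mem h1 hd hu)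
        obtain ⟨y2, hy2, hle2⟩ := hlt.1 _ (om_comp_mem h1 (om_neg_mem h1 hd) hu)
        apply om_engine_beta h2 h2r.2 hz2 hz2ne hzg hza hzb hy1 hy2 (s := u g) hug
        · exact om_pin hle1 hug (by rw [om_comp_right hde])
        · exact om_pin hle1 hza
            (by rw [om_comp_left (show d a ≠ 0 by rw [hda]; exact hza)]; exact hda)
        · exact om_pin hle1 (om_neg_ne_zero _ hzb)
            (by rw [om_comp_left (show d b ≠ 0 by rw [hdb]; exact om_neg_ne_zero _ hzb)]
                exact hdb)
        · exact om_pin hle2 hug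
            (by rw [om_comp_right (show (-d) g = 0 by rw [om_vneg_apply, hde]; rfl)])
        · exact om_pin hle2 (om_neg_ne_zero _ hza)
            (by rw [om_comp_left (show (-d) a ≠ 0 by
              rw [om_vneg_apply, hda]; exact om_neg_ne_zero _ hza), om_vneg_apply, hda])
        · exact om_pin hle2 hzb
            (by rw [om_comp_left (show (-d) b ≠ 0 by
              rw [om_vneg_apply, hdb]; exact om_neg_ne_zero _ (om_neg_ne_zero _ hzb)),
              om_vneg_apply, hdb, om_neg_neg])
      · -- γ case
        have hloop : ∀ g : Fin n, z2 g = 0 → ∀ x ∈ V1, x g = 0 := by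
          intro g hg x hx
          by_contra hc
          exact hβ ⟨g, x, hg, hx, hc⟩
        exact om_gamma h1 h1r h2 h2r.2 hz2 hlt.1 hloop
          (fun x hx hx0 => hmix x hx hx0 (fun i hi => hloop i hi x hx))
  -- Step 2: compose everything in A
  obtain ⟨z0, hz0V, hz00, hz0le⟩ := hAne
  set L := (Finset.univ.filter
    (fun z : SignVec n => z ∈ V1 ∧ z ≠ 0 ∧ svLe z z2)).toList with hLdef
  have hmemL : ∀ z : SignVec n, z ∈ V1 → z ≠ 0 → svLe z z2 → z ∈ L := by
    intro z h1' h2' h3'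
    rw [hLdef, Finset.mem_toList, Finset.mem_filter]
    exact ⟨Finset.mem_univ _, h1', h2', h3'⟩
  have hLall : ∀ x ∈ L, x ∈ V1 ∧ svLe x z2 := by
    intro x hx
    rw [hLdef, Finset.mem_toList, Finset.mem_filter] at hx
    exact ⟨hx.2.1, hx.2.2.2⟩
  obtain ⟨hmV, hmle, hmsupp⟩ := om_fold h1 z2 L hLall
  set m := L.foldr svComp 0 with hmdef
  have hm0 : m ≠ 0 := by
    obtain ⟨i, hi⟩ := om_ne_zero_iff.mp hz00
    exact om_ne_zero_iff.mpr ⟨i, hmsupp z0 (hmemL z0 hz0V hz00 hz0le) i hi⟩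
  refine ⟨m, ⟨hmV, hm0, hmle⟩, ?_⟩
  intro z hzV hz0 hzle
  intro i
  by_cases hzi : z i = 0
  · exact Or.inl hzi
  · right
    have hmi : m i ≠ 0 := hmsupp z (hmemL z hzV hz0 hzle) i hzi
    rw [← om_le_at hzle hzi, ← om_le_at hmle hmi]

end OMMain

/-- Let `M₁ < M₂` be rank-2 oriented matroids (given by their covector sets `V₁ < V₂` in the
weak map order) and `z₂` a nonzero covector of `M₂`. Then the set
`A = {z ∈ V₁ \ {0} : z ≤ z₂}` has a maximal element dominating all others in `A`. -/
theorem exists_max_covector_below (n : ℕ) (V1 V2 : Set (SignVec n))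
    (h1 : IsCovectorSet V1) (h1r : IsRank V1 2)
    (h2 : IsCovectorSet V2) (h2r : IsRank V2 2)
    (hlt : weakLt V1 V2)
    (z2 : SignVec n) (hz2 : z2 ∈ V2) (hz2ne : z2 ≠ 0) :
    ∃ m, (m ∈ V1 ∧ m ≠ 0 ∧ svLe m z2) ∧
      ∀ z, z ∈ V1 → z ≠ 0 → svLe z z2 → svLe z m := by
  exact exists_max_covector_below' n V1 V2 h1 h1r h2 h2r hlt z2 hz2 hz2ne
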